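/- Let X be an HDA and x̃, z̃ ∈ X̃ cubes in its unfolding. Then there is a cube path from x̃ to z̃ in X̃ if and only if x̃ ⊑ z̃, i.e. x̃ is a prefix of z̃ as homotopy classes of pointed cube paths. -/

import Mathlib

set_option autoImplicit false

/-- A precubical set: a graded set with face maps `δ_k^ν` (ν encoded as `Bool`,
`false` = lower face `δ^0`, `true` = upper face `δ^1`; indices are 0-based)
satisfying the precubical identity. -/
structure PCSet : Type 1 where
  cube : ℕ → Type
  face : ∀ {n : ℕ}, Bool → Fin (n + 1) → cube (n + 1) → cube n
  precub : ∀ {n : ℕ} (ν μ : Bool) (k l : ℕ) (hk : k < n + 1) (hl : l < n + 2)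
      (_ : k < l) (x : cube (n + 2)),
      face ν ⟨k, hk⟩ (face μ ⟨l, hl⟩ x) =
        face μ ⟨l - 1, by omega⟩ (face ν ⟨k, by omega⟩ x)

namespace PCSet

/-- A cube of arbitrary dimension. -/
abbrev Cell (X : PCSet) : Type := Σ n : ℕ, X.cube n

/-- One step of a cube path: either `x = δ_k^0 y` or `y = δ_k^1 x`. -/
def Step (X : PCSet) (x y : X.Cell) : Prop :=
  (∃ (n : ℕ) (k : Fin (n + 1)) (c : X.cube (n + 1)),
      x = ⟨n, X.face false k c⟩ ∧ y = ⟨n + 1, c⟩) ∨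
  (∃ (n : ℕ) (k : Fin (n + 1)) (c : X.cube (n + 1)),
      x = ⟨n + 1, c⟩ ∧ y = ⟨n, X.face true k c⟩)

/-- A cube path: a nonempty sequence of cubes, consecutive ones related by `Step`. -/
def IsCubePath (X : PCSet) (l : List X.Cell) : Prop :=
  l ≠ [] ∧ l.Chain' X.Step

/-- Adjacency condition (1): `x_{p−1} = δ_k^0 x_p`, `x_p = δ_ℓ^0 x_{p+1}`,
`y_{p−1} = δ_{ℓ−1}^0 y_p`, `y_p = δ_k^0 y_{p+1}`, `k < ℓ`.
Here `a = x_{p-1} = y_{p-1}`, `b = x_p`, `b' = y_p`, `c = x_{p+1} = y_{p+1}`. -/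
def Adj1 (X : PCSet) (a b b' c : X.Cell) : Prop :=
  ∃ (n k l : ℕ) (hk : k < n + 1) (hl : l < n + 2) (_ : k < l) (u : X.cube (n + 2)),
    c = ⟨n + 2, u⟩ ∧
    b = ⟨n + 1, X.face false ⟨l, hl⟩ u⟩ ∧
    b' = ⟨n + 1, X.face false ⟨k, by omega⟩ u⟩ ∧
    a = ⟨n, X.face false ⟨k, hk⟩ (X.face false ⟨l, hl⟩ u)⟩ ∧
    a = ⟨n, X.face false ⟨l - 1, by omega⟩ (X.face false ⟨k, by omega⟩ u)⟩

/-- Adjacency condition (2): `x_p = δ_k^1 x_{p−1}`, `x_{p+1} = δ_ℓ^1 x_p`,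
`y_p = δ_{ℓ−1}^1 y_{p−1}`, `y_{p+1} = δ_k^1 y_p`, `k < ℓ`. -/
def Adj2 (X : PCSet) (a b b' c : X.Cell) : Prop :=
  ∃ (n k l : ℕ) (hk : k < n + 2) (hl : l < n + 1) (_ : k < l) (u : X.cube (n + 2)),
    a = ⟨n + 2, u⟩ ∧
    b = ⟨n + 1, X.face true ⟨k, hk⟩ u⟩ ∧
    b' = ⟨n + 1, X.face true ⟨l - 1, by omega⟩ u⟩ ∧
    c = ⟨n, X.face true ⟨l, hl⟩ (X.face true ⟨k, hk⟩ u)⟩ ∧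
    c = ⟨n, X.face true ⟨k, by omega⟩ (X.face true ⟨l - 1, by omega⟩ u)⟩

/-- Adjacency condition (3): `x_p = δ_k^0 δ_ℓ^1 y_p`, `y_{p−1} = δ_k^0 y_p`,
`y_{p+1} = δ_ℓ^1 y_p`, `k < ℓ`. -/
def Adj3 (X : PCSet) (a b b' c : X.Cell) : Prop :=
  ∃ (n k l : ℕ) (hk : k < n + 1) (hl : l < n + 2) (_ : k < l) (u : X.cube (n + 2)),
    b' = ⟨n + 2, u⟩ ∧
    b = ⟨n, X.face false ⟨k, hk⟩ (X.face true ⟨l, hl⟩ u)⟩ ∧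
    a = ⟨n + 1, X.face false ⟨k, by omega⟩ u⟩ ∧
    c = ⟨n + 1, X.face true ⟨l, hl⟩ u⟩

/-- Adjacency condition (4): `x_p = δ_k^1 δ_ℓ^0 y_p`, `y_{p−1} = δ_ℓ^0 y_p`,
`y_{p+1} = δ_k^1 y_p`, `k < ℓ`. -/
def Adj4 (X : PCSet) (a b b' c : X.Cell) : Prop :=
  ∃ (n k l : ℕ) (hk : k < n + 1) (hl : l < n + 2) (_ : k < l) (u : X.cube (n + 2)),
    b' = ⟨n + 2, u⟩ ∧
    b = ⟨n, X.face true ⟨k, hk⟩ (X.face false ⟨l, hl⟩ u)⟩ ∧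
    a = ⟨n + 1, X.face false ⟨l, hl⟩ u⟩ ∧
    c = ⟨n + 1, X.face true ⟨k, by omega⟩ u⟩

/-- One of the four adjacency conditions holds, possibly with the roles of the
two paths exchanged. -/
def AdjMid (X : PCSet) (a b b' c : X.Cell) : Prop :=
  Adj1 X a b b' c ∨ Adj2 X a b b' c ∨ Adj3 X a b b' c ∨ Adj4 X a b b' c ∨
  Adj1 X a b' b c ∨ Adj2 X a b' b c ∨ Adj3 X a b' b c ∨ Adj4 X a b' b c

/-- Two cube paths are adjacent: they agree everywhere except at exactly one
(interior) index `p`, where one of the four exchange conditions holds. -/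
def Adjacent (X : PCSet) (l₁ l₂ : List X.Cell) : Prop :=
  X.IsCubePath l₁ ∧ X.IsCubePath l₂ ∧ l₁.length = l₂.length ∧
  ∃ p : ℕ, 0 < p ∧ p + 1 < l₁.length ∧
    (∀ q : ℕ, q ≠ p → l₁[q]? = l₂[q]?) ∧
    l₁[p]? ≠ l₂[p]? ∧
    ∃ a b b' c : X.Cell,
      l₁[p - 1]? = some a ∧ l₁[p]? = some b ∧ l₂[p]? = some b' ∧
      l₁[p + 1]? = some c ∧ X.AdjMid a b b' c

/-- Homotopy of cube paths: the reflexive-transitive closure of adjacency. -/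
def Homotopic (X : PCSet) : List X.Cell → List X.Cell → Prop :=
  Relation.ReflTransGen X.Adjacent

/-- Iterated application of face maps, parameters in application order. -/
inductive IterFace (X : PCSet) : X.Cell → List (ℕ × Bool) → X.Cell → Prop
  | nil (c : X.Cell) : IterFace X c [] c
  | cons {n : ℕ} (ν : Bool) (k : Fin (n + 1)) (c : X.cube (n + 1)) {l : List (ℕ × Bool)}
      {res : X.Cell} :
      IterFace X ⟨n, X.face ν k c⟩ l res →
      IterFace X ⟨n + 1, c⟩ ((k.1, ν) :: l) res

/-- `p` is obtained from `c` as `δ_{k_1}^{ν_1}⋯δ_{k_q}^{ν_q} c` where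
`k_1 < ⋯ < k_q` (in application order, the index list `ks` is strictly
decreasing). -/
def RepGen (X : PCSet) (c p : X.Cell) (ks : List ℕ) : Prop :=
  List.Pairwise (· > ·) ks ∧
  ∃ νs : List Bool, νs.length = ks.length ∧ IterFace X c (ks.zip νs) p

/-- `l` is a representing sequence for a precubical path object. -/
def IsRep (X : PCSet) (l : List X.Cell) : Prop :=
  l ≠ [] ∧ l.Nodup ∧ l.Chain' X.Step ∧
  ∀ p : X.Cell, ∃ c ∈ l, (∃ ks, RepGen X c p ks) ∧
    ∀ ks₁ ks₂ : List ℕ, RepGen X c p ks₁ → RepGen X c p ks₂ → ks₁ = ks₂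

/-- Morphisms of precubical sets. -/
structure Hom (X Y : PCSet) where
  map : ∀ n : ℕ, X.cube n → Y.cube n
  comm : ∀ (n : ℕ) (ν : Bool) (k : Fin (n + 1)) (x : X.cube (n + 1)),
    map n (X.face ν k x) = Y.face ν k (map (n + 1) x)

def Hom.id (X : PCSet) : Hom X X where
  map _ x := x
  comm _ _ _ _ := rfl

def Hom.comp {X Y Z : PCSet} (g : Hom Y Z) (f : Hom X Y) : Hom X Z where
  map n x := g.map n (f.map n x)
  comm n ν k x := by (try dsimp only); rw [f.comm, g.comm]

def Hom.cell {X Y : PCSet} (f : Hom X Y) (x : X.Cell) : Y.Cell := ⟨x.1, f.map x.1 x.2⟩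

/-- `R` is a precubical subset of the product `X × Y`. -/
def PrecubRel (X Y : PCSet) (R : Set (X.Cell × Y.Cell)) : Prop :=
  (∀ p ∈ R, p.1.1 = p.2.1) ∧
  ∀ (n : ℕ) (x : X.cube (n + 1)) (y : Y.cube (n + 1)),
    ((⟨n + 1, x⟩, ⟨n + 1, y⟩) : X.Cell × Y.Cell) ∈ R →
    ∀ (ν : Bool) (k : Fin (n + 1)),
      ((⟨n, X.face ν k x⟩, ⟨n, Y.face ν k y⟩) : X.Cell × Y.Cell) ∈ R

/-- One-step bisimulation via a precubical relation (condition (2) of Thm 3.4). -/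
def OneStepBisim (X Y : PCSet) (bx : X.Cell) (by' : Y.Cell) : Prop :=
  ∃ R : Set (X.Cell × Y.Cell), PrecubRel X Y R ∧ (bx, by') ∈ R ∧
    ∀ (n : ℕ) (x₁ : X.cube n) (y₁ : Y.cube n),
      ((⟨n, x₁⟩, ⟨n, y₁⟩) : X.Cell × Y.Cell) ∈ R →
      (∀ (x₂ : X.cube (n + 1)) (k : Fin (n + 1)), x₁ = X.face false k x₂ →
        ∃ y₂ : Y.cube (n + 1), y₁ = Y.face false k y₂ ∧
          ((⟨n + 1, x₂⟩, ⟨n + 1, y₂⟩) : X.Cell × Y.Cell) ∈ R) ∧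
      (∀ (y₂ : Y.cube (n + 1)) (k : Fin (n + 1)), y₁ = Y.face false k y₂ →
        ∃ x₂ : X.cube (n + 1), x₁ = X.face false k x₂ ∧
          ((⟨n + 1, x₂⟩, ⟨n + 1, y₂⟩) : X.Cell × Y.Cell) ∈ R)

/-- Cube-path matching bisimulation (condition (3) of Thm 3.4). -/
def PathBisim (X Y : PCSet) (bx : X.Cell) (by' : Y.Cell) : Prop :=
  ∃ R : Set (X.Cell × Y.Cell), PrecubRel X Y R ∧ (bx, by') ∈ R ∧
    ∀ (x₁ : X.Cell) (y₁ : Y.Cell), (x₁, y₁) ∈ R →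
      (∀ lx : List X.Cell, X.IsCubePath lx → lx.head? = some x₁ →
        ∃ ly : List Y.Cell, Y.IsCubePath ly ∧ ly.head? = some y₁ ∧
          ly.length = lx.length ∧ ∀ pr ∈ lx.zip ly, pr ∈ R) ∧
      (∀ ly : List Y.Cell, Y.IsCubePath ly → ly.head? = some y₁ →
        ∃ lx : List X.Cell, X.IsCubePath lx ∧ lx.head? = some x₁ ∧
          lx.length = ly.length ∧ ∀ pr ∈ lx.zip ly, pr ∈ R)

/-- A fan-shaped cube path: one-dimensional (alternating dimensions 0 and 1)
until it has to build up to its end cube of dimension `n`. -/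
def IsFan (X : PCSet) (l : List X.Cell) : Prop :=
  ∃ (n : ℕ) (c : X.cube n), l.getLast? = some ⟨n, c⟩ ∧
    ∀ (i : ℕ) (hi : i < l.length),
      (i + n + 1 ≤ l.length → (l.get ⟨i, hi⟩).1 = if i % 2 = 0 then 0 else 1) ∧
      (l.length < i + n + 1 → (l.get ⟨i, hi⟩).1 = n + i + 1 - l.length)

/-- The cube path `(x_1, …, x_n, x)` obtained by repeatedly taking lower faces
`x_j = δ_{k_j}^0 ⋯ δ_{k_n}^0 x`, one for each choice of indices `k_j ≤ j`. -/
def lowerChain (X : PCSet) : ∀ (n : ℕ), X.cube n → (∀ j : Fin n, Fin (j.1 + 1)) → List X.Cell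
  | 0, x, _ => [⟨0, x⟩]
  | n + 1, x, ks =>
      lowerChain X n (X.face false (ks ⟨n, Nat.lt_succ_self n⟩) x)
        (fun j => ks ⟨j.1, by omega⟩) ++ [⟨n + 1, x⟩]

end PCSet

open PCSet

/-- A higher-dimensional automaton: a pointed precubical set. -/
structure HDA extends PCSet where
  base : cube 0

/-- Pointed morphisms of higher-dimensional automata. -/
structure HDAHom (X Y : HDA) where
  toHom : Hom X.toPCSet Y.toPCSet
  pointed : toHom.map 0 X.base = Y.base

def HDAHom.id (X : HDA) : HDAHom X X := ⟨Hom.id _, rfl⟩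

def HDAHom.comp {X Y Z : HDA} (g : HDAHom Y Z) (f : HDAHom X Y) : HDAHom X Z :=
  ⟨g.toHom.comp f.toHom, by
    show g.toHom.map 0 (f.toHom.map 0 X.base) = Z.base
    rw [f.pointed, g.pointed]⟩

def HDAHom.IsIso {X Y : HDA} (f : HDAHom X Y) : Prop :=
  ∃ g : HDAHom Y X, g.comp f = HDAHom.id X ∧ f.comp g = HDAHom.id Y

/-- A pointed cube path: a cube path starting in the base point. -/
def HDA.IsPointedPath (X : HDA) (l : List X.toPCSet.Cell) : Prop :=
  X.toPCSet.IsCubePath l ∧ l.head? = some ⟨0, X.base⟩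

/-- A cube is reachable if some pointed cube path ends in it. -/
def HDA.Reachable (X : HDA) (x : X.toPCSet.Cell) : Prop :=
  ∃ l, X.IsPointedPath l ∧ l.getLast? = some x

/-- The type of pointed cube paths of `X` ending in an `n`-cube. -/
def HDA.PPath (X : HDA) (n : ℕ) : Type :=
  { l : List X.toPCSet.Cell //
      X.IsPointedPath l ∧ ∃ c : X.cube n, l.getLast? = some ⟨n, c⟩ }

/-- A pointed precubical path object (object of the category HDP). -/
def HDA.IsPathObj (P : HDA) : Prop :=
  ∃ l, IsRep P.toPCSet l ∧ l.head? = some ⟨0, P.base⟩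

/-- A cube path extension: maps the representation of `P` to an initial segment
of the representation of `Q`. -/
def IsExtension {P Q : HDA} (f : HDAHom P Q) : Prop :=
  ∃ (lp : List P.toPCSet.Cell) (lq : List Q.toPCSet.Cell),
    IsRep P.toPCSet lp ∧ lp.head? = some ⟨0, P.base⟩ ∧
    IsRep Q.toPCSet lq ∧ lq.head? = some ⟨0, Q.base⟩ ∧
    ∃ hle : lp.length ≤ lq.length,
      ∀ (j : ℕ) (hj : j < lp.length),
        f.toHom.cell (lp.get ⟨j, hj⟩) = lq.get ⟨j, lt_of_lt_of_le hj hle⟩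

/-- Morphisms of the category HDP: generated by pointed cube path extensions
and isomorphisms between pointed precubical path objects. -/
inductive IsHDPHom : ∀ {P Q : HDA}, HDAHom P Q → Prop
  | ext {P Q : HDA} (f : HDAHom P Q) :
      P.IsPathObj → Q.IsPathObj → IsExtension f → IsHDPHom f
  | iso {P Q : HDA} (f : HDAHom P Q) :
      P.IsPathObj → Q.IsPathObj → f.IsIso → IsHDPHom f
  | comp {P Q R : HDA} {f : HDAHom P Q} {g : HDAHom Q R} :
      IsHDPHom f → IsHDPHom g → IsHDPHom (g.comp f)

/-- Open maps of HDA: right lifting property with respect to HDP. -/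
def IsOpenHom {X Y : HDA} (f : HDAHom X Y) : Prop :=
  ∀ (P Q : HDA) (g : HDAHom P Q), IsHDPHom g →
    ∀ (p : HDAHom P X) (q : HDAHom Q Y), f.comp p = q.comp g →
      ∃ r : HDAHom Q X, r.comp g = p ∧ f.comp r = q

/-- hd-bisimilarity: a span of open maps. -/
def HdBisimilar (X Y : HDA) : Prop :=
  ∃ (Z : HDA) (f : HDAHom Z X) (g : HDAHom Z Y), IsOpenHom f ∧ IsOpenHom g

/-- A higher-dimensional tree: every cube is the end of exactly one homotopy
class of pointed cube paths. -/
def HDA.IsTree (X : HDA) : Prop :=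
  ∀ x : X.toPCSet.Cell,
    (∃ l, X.IsPointedPath l ∧ l.getLast? = some x) ∧
    ∀ l₁ l₂ : List X.toPCSet.Cell, X.IsPointedPath l₁ → l₁.getLast? = some x →
      X.IsPointedPath l₂ → l₂.getLast? = some x → X.toPCSet.Homotopic l₁ l₂

/-- An unfolding of the HDA `X`: an HDA `Xu` whose `n`-cubes are exactly the
homotopy classes (`cls`) of pointed cube paths of `X` ending in an `n`-cube,
with the face maps, base point and projection of Definition 4.3. -/
structure Unfolding (X : HDA) where
  Xu : HDA
  proj : HDAHom Xu X
  cls : ∀ n : ℕ, X.PPath n → Xu.cube n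
  cls_eq : ∀ (n : ℕ) (a b : X.PPath n),
    cls n a = cls n b ↔ X.toPCSet.Homotopic a.1 b.1
  cls_surj : ∀ (n : ℕ) (x : Xu.cube n), ∃ a, cls n a = x
  cls_base : ∀ a : X.PPath 0, a.1 = [⟨0, X.base⟩] → cls 0 a = Xu.base
  face_true : ∀ (n : ℕ) (k : Fin (n + 1)) (a : X.PPath (n + 1)) (c : X.cube (n + 1)),
    a.1.getLast? = some ⟨n + 1, c⟩ →
    ∀ b : X.PPath n, b.1 = a.1 ++ [⟨n, X.toPCSet.face true k c⟩] →
      Xu.toPCSet.face true k (cls (n + 1) a) = cls n b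
  face_false : ∀ (n : ℕ) (k : Fin (n + 1)) (a : X.PPath (n + 1)) (c : X.cube (n + 1)),
    a.1.getLast? = some ⟨n + 1, c⟩ →
    ∀ b : X.PPath n,
      (Xu.toPCSet.face false k (cls (n + 1) a) = cls n b ↔
        b.1.getLast? = some ⟨n, X.toPCSet.face false k c⟩ ∧
          X.toPCSet.Homotopic (b.1 ++ [⟨n + 1, c⟩]) a.1)
  proj_cls : ∀ (n : ℕ) (a : X.PPath n) (c : X.cube n),
    a.1.getLast? = some ⟨n, c⟩ → proj.toHom.map n (cls n a) = c

/-- The set `δ̃_k^0 [l]` of Definition 4.3: pointed cube paths `l'` with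
`l'` ending in `δ_k^0 c` and `l' * (c) ∼ l`. -/
def predSet (X : HDA) (n : ℕ) (k : Fin (n + 1)) (c : X.cube (n + 1))
    (l : List X.toPCSet.Cell) : Set (List X.toPCSet.Cell) :=
  { l' | X.IsPointedPath l' ∧ l'.getLast? = some ⟨n, X.toPCSet.face false k c⟩ ∧
      X.toPCSet.Homotopic (l' ++ [(⟨n + 1, c⟩ : X.toPCSet.Cell)]) l }

/-- Prefix order on homotopy classes (cubes of an unfolding): some
representatives are prefix-related. -/
def Unfolding.ClassLe {X : HDA} (U : Unfolding X) (c d : U.Xu.toPCSet.Cell) : Prop :=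
  ∃ (a : X.PPath c.1) (b : X.PPath d.1),
    U.cls c.1 a = c.2 ∧ U.cls d.1 b = d.2 ∧ a.1 <+: b.1

/-- `h` is the morphism of unfoldings induced by `g` (i.e. `g̃`). -/
def IsUnfoldMap {X Y : HDA} (UX : Unfolding X) (UY : Unfolding Y)
    (g : HDAHom X Y) (h : HDAHom UX.Xu UY.Xu) : Prop :=
  ∀ (n : ℕ) (a : X.PPath n), ∃ b : Y.PPath n,
    b.1 = a.1.map g.toHom.cell ∧ h.toHom.map n (UX.cls n a) = UY.cls n b

/-- Open maps in the category HDAh: right lifting property with respect to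
HDPh (morphisms of unfoldings corresponding to HDP-morphisms under the
projections). -/
def IsOpenHDAh {X Y : HDA} (UX : Unfolding X) (UY : Unfolding Y)
    (f : HDAHom UX.Xu UY.Xu) : Prop :=
  ∀ (P Q : HDA) (UP : Unfolding P) (UQ : Unfolding Q) (g : HDAHom UP.Xu UQ.Xu),
    (∃ g₀ : HDAHom P Q, IsHDPHom g₀ ∧ UQ.proj.comp g = g₀.comp UP.proj) →
    ∀ (p : HDAHom UP.Xu UX.Xu) (q : HDAHom UQ.Xu UY.Xu),
      f.comp p = q.comp g →
      ∃ r : HDAHom UQ.Xu UX.Xu, r.comp g = p ∧ f.comp r = q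

/-- Homotopy bisimilarity: a span of open maps in HDAh. -/
def HomotopyBisimilar (X Y : HDA) : Prop :=
  ∃ (Z : HDA) (UX : Unfolding X) (UY : Unfolding Y) (UZ : Unfolding Z)
    (f : HDAHom UZ.Xu UX.Xu) (g : HDAHom UZ.Xu UY.Xu),
    IsOpenHDAh UZ UX f ∧ IsOpenHDAh UZ UY g

/-- Prefix-matching bisimulation on unfoldings (condition (4) of Prop 6.5). -/
def PrefixBisim {X Y : HDA} (UX : Unfolding X) (UY : Unfolding Y) : Prop :=
  ∃ R : Set (UX.Xu.toPCSet.Cell × UY.Xu.toPCSet.Cell),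
    PrecubRel UX.Xu.toPCSet UY.Xu.toPCSet R ∧
    ((⟨0, UX.Xu.base⟩, ⟨0, UY.Xu.base⟩) : _ × _) ∈ R ∧
    ∀ (c : UX.Xu.toPCSet.Cell) (d : UY.Xu.toPCSet.Cell), (c, d) ∈ R →
      (∀ c₂, UX.ClassLe c c₂ → ∃ d₂, UY.ClassLe d d₂ ∧ (c₂, d₂) ∈ R) ∧
      (∀ d₂, UY.ClassLe d d₂ → ∃ c₂, UX.ClassLe c c₂ ∧ (c₂, d₂) ∈ R)

/-- One refinement step of the fixed-point algorithm deciding hd-bisimilarity. -/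
def refineStep (X Y : HDA) (S : Set (X.toPCSet.Cell × Y.toPCSet.Cell)) :
    Set (X.toPCSet.Cell × Y.toPCSet.Cell) :=
  { p | p ∈ S ∧ p.1.1 = p.2.1 ∧
    (∀ (n : ℕ) (x : X.cube (n + 1)) (y : Y.cube (n + 1)),
      p = (⟨n + 1, x⟩, ⟨n + 1, y⟩) →
      ∀ (ν : Bool) (k : Fin (n + 1)),
        ((⟨n, X.toPCSet.face ν k x⟩, ⟨n, Y.toPCSet.face ν k y⟩) : _ × _) ∈ S) ∧
    (∀ (n : ℕ) (x₁ : X.cube n) (y₁ : Y.cube n),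
      p = (⟨n, x₁⟩, ⟨n, y₁⟩) →
      (∀ (x₂ : X.cube (n + 1)) (k : Fin (n + 1)), x₁ = X.toPCSet.face false k x₂ →
        ∃ y₂ : Y.cube (n + 1), y₁ = Y.toPCSet.face false k y₂ ∧
          ((⟨n + 1, x₂⟩, ⟨n + 1, y₂⟩) : _ × _) ∈ S) ∧
      (∀ (y₂ : Y.cube (n + 1)) (k : Fin (n + 1)), y₁ = Y.toPCSet.face false k y₂ →
        ∃ x₂ : X.cube (n + 1), x₁ = X.toPCSet.face false k x₂ ∧
          ((⟨n + 1, x₂⟩, ⟨n + 1, y₂⟩) : _ × _) ∈ S)) }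

/-!
Every step of a cube path in the unfolding extends a representative by one cube: for an upper
face this is the definition of `δ̃^1`, and for a lower face `δ̃_k^0 [l] = [l']` means that
`l' * (c)` is homotopic to `l`. Conversely, appending one cube to a pointed cube path is a step
in the unfolding. Hence cube paths in the unfolding are chains of one-cube extensions, i.e.
prefixes of representatives.
-/

namespace PCSet

theorem exists_cubePath_iff_reflTransGen (X : PCSet) (c e : X.Cell) :
    (∃ l, X.IsCubePath l ∧ l.head? = some c ∧ l.getLast? = some e) ↔
      Relation.ReflTransGen X.Step c e := by
  constructor
  · rintro ⟨l, ⟨hne, hch⟩, hc, he⟩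
    rw [List.head?_eq_some_head hne, Option.some_inj] at hc
    rw [List.getLast?_eq_some_getLast hne, Option.some_inj] at he
    exact hc ▸ he ▸ List.relationReflTransGen_of_exists_isChain l hch hne
  · intro h
    obtain ⟨l, hne, hch, hc, he⟩ := List.exists_isChain_ne_nil_of_relationReflTransGen h
    exact ⟨l, ⟨hne, hch⟩, by rw [List.head?_eq_some_head hne, hc],
      by rw [List.getLast?_eq_some_getLast hne, he]⟩

theorem IsCubePath.concat {X : PCSet} {l : List X.Cell} {y z : X.Cell} (hl : X.IsCubePath l)
    (hy : l.getLast? = some y) (hyz : X.Step y z) : X.IsCubePath (l ++ [z]) := by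
  refine ⟨by simp, List.isChain_append.mpr ⟨hl.2, List.isChain_singleton z, ?_⟩⟩
  simp [hy, hyz]

end PCSet

namespace HDA

variable {X : HDA} {l L : List X.toPCSet.Cell}

theorem IsPointedPath.concat {y z : X.toPCSet.Cell} (hl : X.IsPointedPath l)
    (hy : l.getLast? = some y) (hyz : X.toPCSet.Step y z) : X.IsPointedPath (l ++ [z]) :=
  ⟨hl.1.concat hy hyz, by rw [List.head?_append_of_ne_nil _ hl.1.1]; exact hl.2⟩

theorem IsPointedPath.of_prefix (hL : X.IsPointedPath L) (hlL : l <+: L) (hl : l ≠ []) :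
    X.IsPointedPath l := by
  refine ⟨⟨hl, hL.1.2.prefix hlL⟩, ?_⟩
  rw [List.head?_eq_some_head hl, hlL.head hl, ← List.head?_eq_some_head]
  exact hL.2

theorem IsPointedPath.exists_pPath (hl : X.IsPointedPath l) :
    ∃ (p : ℕ) (a : X.PPath p), a.1 = l :=
  ⟨_, ⟨l, hl, (l.getLast hl.1.1).2, List.getLast?_eq_some_getLast hl.1.1⟩, rfl⟩

end HDA

namespace Unfolding

variable {X : HDA} (U : Unfolding X)

theorem sigma_cls_eq_of_val_eq {n m : ℕ} (a : X.PPath n) (b : X.PPath m) (h : a.1 = b.1) :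
    (⟨n, U.cls n a⟩ : U.Xu.toPCSet.Cell) = ⟨m, U.cls m b⟩ := by
  obtain ⟨ca, ha⟩ := a.2.2
  obtain ⟨cb, hb⟩ := b.2.2
  rw [h, hb, Option.some_inj, Sigma.mk.inj_iff] at ha
  obtain rfl := ha.1
  obtain rfl : a = b := Subtype.ext h
  rfl

theorem step_cls_of_val_eq_concat {n m : ℕ} (a : X.PPath n) (b : X.PPath m) (y : X.toPCSet.Cell)
    (h : b.1 = a.1 ++ [y]) : U.Xu.toPCSet.Step ⟨n, U.cls n a⟩ ⟨m, U.cls m b⟩ := by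
  obtain ⟨ca, ha⟩ := a.2.2
  obtain ⟨cb, hb⟩ := b.2.2
  obtain rfl : y = ⟨m, cb⟩ := by rw [h, List.getLast?_concat, Option.some_inj] at hb; exact hb
  have hstep : X.toPCSet.Step ⟨n, ca⟩ ⟨m, cb⟩ :=
    (List.isChain_append.mp (h ▸ b.2.1.1.2)).2.2 _ ha _ rfl
  rcases hstep with ⟨p, k, c, h₁, h₂⟩ | ⟨p, k, c, h₁, h₂⟩
  · obtain ⟨rfl, h₁⟩ := Sigma.mk.inj_iff.mp h₁
    obtain ⟨rfl, h₂⟩ := Sigma.mk.inj_iff.mp h₂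
    obtain rfl := eq_of_heq h₁
    obtain rfl := eq_of_heq h₂
    have hface : U.Xu.toPCSet.face false k (U.cls (n + 1) b) = U.cls n a :=
      (U.face_false n k b cb hb a).mpr ⟨ha, h ▸ Relation.ReflTransGen.refl⟩
    exact Or.inl ⟨n, k, _, by rw [hface], rfl⟩
  · obtain ⟨rfl, h₁⟩ := Sigma.mk.inj_iff.mp h₁
    obtain ⟨rfl, h₂⟩ := Sigma.mk.inj_iff.mp h₂
    obtain rfl := eq_of_heq h₁
    obtain rfl := eq_of_heq h₂
    exact Or.inr ⟨m, k, _, rfl, by rw [U.face_true m k a ca ha b h]⟩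

theorem exists_pPath_concat_of_step {n : ℕ} (b : X.PPath n) (e : U.Xu.toPCSet.Cell)
    (h : U.Xu.toPCSet.Step ⟨n, U.cls n b⟩ e) :
    ∃ b' : X.PPath e.1, U.cls e.1 b' = e.2 ∧ b.1 <+: b'.1 := by
  obtain ⟨cb, hb⟩ := b.2.2
  rcases h with ⟨p, k, u, h₁, rfl⟩ | ⟨p, k, u, h₁, rfl⟩
  · obtain ⟨rfl, h₁⟩ := Sigma.mk.inj_iff.mp h₁
    obtain ⟨g, rfl⟩ := U.cls_surj (n + 1) u
    obtain ⟨c, hc⟩ := g.2.2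
    obtain ⟨hb', hhom⟩ := (U.face_false n k g c hc b).mp (eq_of_heq h₁).symm
    have hpp := b.2.1.concat hb' (Or.inl ⟨n, k, c, rfl, rfl⟩)
    let b' : X.PPath (n + 1) := ⟨_, hpp, c, List.getLast?_concat⟩
    exact ⟨b', (U.cls_eq (n + 1) b' g).mpr hhom, List.prefix_append _ _⟩
  · obtain ⟨rfl, h₁⟩ := Sigma.mk.inj_iff.mp h₁
    obtain rfl := eq_of_heq h₁
    have hpp := b.2.1.concat hb (Or.inr ⟨p, k, cb, rfl, rfl⟩)
    let b' : X.PPath p := ⟨_, hpp, _, List.getLast?_concat⟩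
    exact ⟨b', (U.face_true p k b cb hb b' rfl).symm, List.prefix_append _ _⟩

theorem classLe_refl (c : U.Xu.toPCSet.Cell) : U.ClassLe c c := by
  obtain ⟨a, ha⟩ := U.cls_surj c.1 c.2
  exact ⟨a, a, ha, ha, List.prefix_refl _⟩

theorem ClassLe.trans_step {c d e : U.Xu.toPCSet.Cell} (hcd : U.ClassLe c d)
    (hde : U.Xu.toPCSet.Step d e) : U.ClassLe c e := by
  obtain ⟨a, b, ha, hb, hab⟩ := hcd
  obtain ⟨b', hb', hbb'⟩ := U.exists_pPath_concat_of_step b e (by rwa [hb])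
  exact ⟨a, b', ha, hb', hab.trans hbb'⟩

theorem reflTransGen_step_of_val_eq_append {n m : ℕ} (a : X.PPath n) (b : X.PPath m)
    (s : List X.toPCSet.Cell) (h : b.1 = a.1 ++ s) :
    Relation.ReflTransGen U.Xu.toPCSet.Step ⟨n, U.cls n a⟩ ⟨m, U.cls m b⟩ := by
  induction s generalizing n a with
  | nil => rw [U.sigma_cls_eq_of_val_eq a b (by simpa using h.symm)]
  | cons y s ih =>
    rw [← List.singleton_append, ← List.append_assoc] at h
    obtain ⟨p, a', ha'⟩ := (b.2.1.of_prefix ⟨s, h.symm⟩ (by simp)).exists_pPath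
    exact .head (U.step_cls_of_val_eq_concat a a' y ha') (ih a' (ha' ▸ h))

theorem reflTransGen_step_iff_classLe (c d : U.Xu.toPCSet.Cell) :
    Relation.ReflTransGen U.Xu.toPCSet.Step c d ↔ U.ClassLe c d := by
  constructor
  · intro h
    induction h with
    | refl => exact U.classLe_refl c
    | tail _ hde hcd => exact hcd.trans_step U hde
  · rintro ⟨a, b, ha, hb, s, hs⟩
    have := U.reflTransGen_step_of_val_eq_append a b s hs.symm
    rwa [ha, hb] at this

end Unfolding

/-- Lemma 6.4: for cubes `x̃, z̃` of the unfolding `X̃` there is a cube path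
from `x̃` to `z̃` in `X̃` if and only if `x̃ ⊑ z̃` as homotopy classes of
pointed cube paths. -/
theorem reach_vs_prefix (X : HDA) (U : Unfolding X) (n m : ℕ)
    (x : U.Xu.cube n) (z : U.Xu.cube m) :
    (∃ l : List U.Xu.toPCSet.Cell, U.Xu.toPCSet.IsCubePath l ∧
        l.head? = some ⟨n, x⟩ ∧ l.getLast? = some ⟨m, z⟩) ↔
      U.ClassLe ⟨n, x⟩ ⟨m, z⟩ := by
  rw [PCSet.exists_cubePath_iff_reflTransGen, U.reflTransGen_step_iff_classLe]
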